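/- The 3ℤ-periodic Leibniz algebra L₇ defined by e_{3k}e_{3m+1} = e_{3(k+m)+1}, e_{3k+1}e_{3m} = −e_{3(k+m)+1}, e_{3k}e_{3m+2} = −e_{3(k+m)+2}, e_{3k+2}e_{3m} = e_{3(k+m)+2}, e_{3k+1}e_{3m+2} = e_{3(k+m+1)}, e_{3k+2}e_{3m+1} = −e_{3(k+m+1)} (all other products zero) satisfies L₇² = L₇; consequently L₇ is not solvable. -/

import Mathlib

open Finsupp

/-- Multiplication with structure constants `c`: `e_a e_b = c(a,b) e_{a+b}`. -/
noncomputable def mulZ {K : Type*} [Field K] (c : ℤ → ℤ → K) (x y : ℤ →₀ K) : ℤ →₀ K :=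
  x.sum fun a xa => y.sum fun b yb => Finsupp.single (a + b) (xa * yb * c a b)

/-- Structure constants of the `3ℤ`-periodic Leibniz algebra `L₇`. -/
def c7 (K : Type*) [Field K] : ℤ → ℤ → K := fun a b =>
  if a % 3 = 0 ∧ b % 3 = 1 then 1
  else if a % 3 = 1 ∧ b % 3 = 0 then -1
  else if a % 3 = 0 ∧ b % 3 = 2 then -1
  else if a % 3 = 2 ∧ b % 3 = 0 then 1
  else if a % 3 = 1 ∧ b % 3 = 2 then 1
  else if a % 3 = 2 ∧ b % 3 = 1 then -1
  else 0

/-- Derived series: `L^[0] = L`, `L^[k+1] = span of products of elements of L^[k]`. -/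
noncomputable def derZ {K : Type*} [Field K] (c : ℤ → ℤ → K) :
    ℕ → Submodule K (ℤ →₀ K)
  | 0 => ⊤
  | k + 1 =>
    Submodule.span K
      {z : ℤ →₀ K | ∃ x ∈ derZ c k, ∃ y ∈ derZ c k, z = mulZ c x y}

/-!
Every basis vector `e_n` is, up to sign, a product of two basis vectors: `e_0 e_n` when `3 ∤ n`
and `e_1 e_{n-1}` when `3 ∣ n`. So the products already span `L₇`, and the derived series is
constant.
-/

section DerivedSeries

variable {K : Type*} [Field K]

lemma mulZ_single (c : ℤ → ℤ → K) (a b : ℤ) (x y : K) :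
    mulZ c (single a x) (single b y) = single (a + b) (x * y * c a b) := by
  simp [mulZ]

lemma single_add_one_mem_derZ_one {c : ℤ → ℤ → K} {a b : ℤ} (h : c a b ≠ 0) :
    single (a + b) (1 : K) ∈ derZ c 1 := by
  have hmul : mulZ c (single a 1) (single b 1) ∈ derZ c 1 :=
    Submodule.subset_span ⟨_, trivial, _, trivial, rfl⟩
  simpa [mulZ_single, smul_single, h] using Submodule.smul_mem _ (c a b)⁻¹ hmul

lemma derZ_one_eq_top {c : ℤ → ℤ → K} (h : ∀ n, ∃ a b, a + b = n ∧ c a b ≠ 0) :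
    derZ c 1 = ⊤ := by
  rw [eq_top_iff, ← Finsupp.basisSingleOne.span_eq, Submodule.span_le]
  rintro _ ⟨n, rfl⟩
  obtain ⟨a, b, rfl, hab⟩ := h n
  simpa using single_add_one_mem_derZ_one hab

lemma derZ_eq_top_of_one_eq_top {c : ℤ → ℤ → K} (h : derZ c 1 = ⊤) : ∀ m, derZ c m = ⊤
  | 0 => rfl
  | m + 1 => by rw [← h]; simp only [derZ, derZ_eq_top_of_one_eq_top h m]

end DerivedSeries

lemma exists_add_eq_c7_ne_zero {K : Type*} [Field K] (n : ℤ) :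
    ∃ a b, a + b = n ∧ c7 K a b ≠ 0 := by
  by_cases hn : n % 3 = 0
  · have : (n - 1) % 3 = 2 := by omega
    exact ⟨1, n - 1, add_sub_cancel 1 n, by simp [c7, this]⟩
  · refine ⟨0, n, zero_add n, ?_⟩
    rcases (by omega : n % 3 = 1 ∨ n % 3 = 2) with h | h <;> simp [c7, h]

theorem stmt18_general {K : Type*} [Field K] :
    derZ (c7 K) 1 = ⊤ ∧ ∀ m : ℕ, derZ (c7 K) m ≠ ⊥ := by
  have hone : derZ (c7 K) 1 = ⊤ := derZ_one_eq_top exists_add_eq_c7_ne_zero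
  exact ⟨hone, fun m => derZ_eq_top_of_one_eq_top hone m ▸ top_ne_bot⟩

/-- `L₇² = L₇`, hence `L₇` is not solvable. -/
theorem stmt18 {K : Type*} [Field K] [CharZero K] :
    derZ (c7 K) 1 = ⊤ ∧ ∀ m : ℕ, derZ (c7 K) m ≠ ⊥ :=
  stmt18_general
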